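/- (Decomposition of the expected repair count over conflict-independent parts.) Let D₁ and D₂ be disjoint finite sets with no conflicts across them (¬C(a,b) for all a ∈ D₁, b ∈ D₂), and set n₁ = |D₁|, n₂ = |D₂|, n = n₁ + n₂. For 0 ≤ m ≤ n, let P^m be the expected value of I_MC over a uniformly random m-element subset of D₁ ∪ D₂, and for i ∈ {1,2} and 0 ≤ mᵢ ≤ nᵢ let Tᵢ^{mᵢ} be the expected value of I_MC over a uniformly random mᵢ-element subset of Dᵢ. Then P^m = (1/C(n,m)) · Σ_{m₁+m₂=m, 0≤m₁≤n₁, 0≤m₂≤n₂} C(n₁,m₁) · C(n₂,m₂) · T₁^{m₁} · T₂^{m₂}. -/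

import Mathlib

open scoped BigOperators Classical

variable {α : Type*} [DecidableEq α]

/-- A finite set `E` is consistent if it contains no two distinct conflicting elements. -/
def Consistent (C : α → α → Prop) (E : Finset α) : Prop :=
  ∀ g ∈ E, ∀ h ∈ E, g ≠ h → ¬ C g h

/-- A repair of `E` is a maximal (under inclusion) consistent subset of `E`. -/
def IsRepair (C : α → α → Prop) (S E : Finset α) : Prop :=
  S ⊆ E ∧ Consistent C S ∧ ∀ S', S ⊆ S' → S' ⊆ E → Consistent C S' → S' = S

/-- The inconsistency measure `I_MC`: the number of repairs of `E`. -/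
noncomputable def IMC (C : α → α → Prop) (E : Finset α) : ℕ :=
  (E.powerset.filter fun S => IsRepair C S E).card

/-- The expected value of `I_MC` over a uniformly random `m`-element subset of `T`. -/
noncomputable def expIMC (C : α → α → Prop) (T : Finset α) (m : ℕ) : ℝ :=
  (∑ S ∈ T.powersetCard m, (IMC C S : ℝ)) / (T.card.choose m : ℝ)

/-!
Facts from conflict-free parts never interact, so a subset `S` of `D₁ ∪ D₂` is the disjoint
union of `S ∩ D₁` and `S ∩ D₂`, and its repairs are exactly the unions of a repair of each
part: `I_MC` is multiplicative across the split. Summing over all `m`-subsets of `D₁ ∪ D₂`,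
grouped by how many elements come from each side, turns the numerator of `P^m` into
`Σ_{m₁+m₂=m} (Σ_{|S₁|=m₁} I_MC(S₁)) (Σ_{|S₂|=m₂} I_MC(S₂))`, and each factor is
`C(nᵢ, mᵢ) · Tᵢ^{mᵢ}`, which vanishes when `mᵢ > nᵢ`.
-/

open Finset

section

variable {β : Type*} {C : β → β → Prop}

theorem Consistent.mono {A B : Finset β} (hB : Consistent C B) (hAB : A ⊆ B) :
    Consistent C A :=
  fun g hg h hh => hB g (hAB hg) h (hAB hh)

theorem mem_filter_isRepair_iff {R E : Finset β} :
    R ∈ E.powerset.filter (fun S => IsRepair C S E) ↔ IsRepair C R E := by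
  rw [mem_filter, mem_powerset, and_iff_right_of_imp (fun h => h.1)]

-- Holds also for `k > T.card`, where `expIMC C T k` is the junk value `0 / 0 = 0`.
theorem choose_mul_expIMC (T : Finset β) (k : ℕ) :
    (T.card.choose k : ℝ) * expIMC C T k = ∑ S ∈ T.powersetCard k, (IMC C S : ℝ) := by
  refine mul_div_cancel_of_imp' fun h => ?_
  rw [powersetCard_eq_empty.mpr, sum_empty]
  by_contra! hk
  exact (Nat.choose_pos hk).ne' (by exact_mod_cast h)

end

variable {D₁ D₂ A B S : Finset α}

theorem inter_union_inter_of_subset_union (hS : S ⊆ D₁ ∪ D₂) : S ∩ D₁ ∪ S ∩ D₂ = S := by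
  rw [← inter_union_distrib_left, inter_eq_left.mpr hS]

theorem union_inter_left_of_disjoint (hdisj : Disjoint D₁ D₂) (hA : A ⊆ D₁) (hB : B ⊆ D₂) :
    (A ∪ B) ∩ D₁ = A := by
  rw [union_inter_distrib_right, inter_eq_left.mpr hA,
    disjoint_iff_inter_eq_empty.mp (hdisj.mono_right hB).symm, union_empty]

theorem union_inter_right_of_disjoint (hdisj : Disjoint D₁ D₂) (hA : A ⊆ D₁) (hB : B ⊆ D₂) :
    (A ∪ B) ∩ D₂ = B := by
  rw [union_comm]
  exact union_inter_left_of_disjoint hdisj.symm hB hA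

theorem sum_powersetCard_union_of_disjoint {M : Type*} [AddCommMonoid M] (f : Finset α → M)
    (hdisj : Disjoint D₁ D₂) (m : ℕ) :
    ∑ S ∈ (D₁ ∪ D₂).powersetCard m, f S =
      ∑ p ∈ antidiagonal m, ∑ S₁ ∈ D₁.powersetCard p.1, ∑ S₂ ∈ D₂.powersetCard p.2,
        f (S₁ ∪ S₂) := by
  simp_rw [← sum_product' _ _ (fun S₁ S₂ => f (S₁ ∪ S₂)), sum_sigma']
  refine sum_nbij' (fun S => ⟨((S ∩ D₁).card, (S ∩ D₂).card), (S ∩ D₁, S ∩ D₂)⟩)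
    (fun x => x.2.1 ∪ x.2.2) ?_ ?_ ?_ ?_ ?_
  · intro S hS
    rw [mem_powersetCard] at hS
    have hsplit := inter_union_inter_of_subset_union hS.1
    have hdisj' := hdisj.mono (inter_subset_right (s₁ := S)) (inter_subset_right (s₁ := S))
    simp only [mem_sigma, HasAntidiagonal.mem_antidiagonal, mem_product,
      mem_powersetCard, inter_subset_right, and_self, and_true]
    rw [← card_union_of_disjoint hdisj', hsplit, hS.2]
  · rintro ⟨⟨k₁, k₂⟩, S₁, S₂⟩ hx
    simp only [mem_sigma, HasAntidiagonal.mem_antidiagonal, mem_product,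
      mem_powersetCard] at hx
    obtain ⟨hsum, ⟨h₁, c₁⟩, h₂, c₂⟩ := hx
    rw [mem_powersetCard]
    refine ⟨union_subset_union h₁ h₂, ?_⟩
    rw [card_union_of_disjoint (hdisj.mono h₁ h₂), c₁, c₂, hsum]
  · intro S hS
    exact inter_union_inter_of_subset_union (mem_powersetCard.mp hS).1
  · rintro ⟨⟨k₁, k₂⟩, S₁, S₂⟩ hx
    simp only [mem_sigma, HasAntidiagonal.mem_antidiagonal, mem_product,
      mem_powersetCard] at hx
    obtain ⟨-, ⟨h₁, c₁⟩, h₂, c₂⟩ := hx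
    simp only [union_inter_left_of_disjoint hdisj h₁ h₂, union_inter_right_of_disjoint hdisj h₁ h₂,
      c₁, c₂]
  · intro S hS
    rw [inter_union_inter_of_subset_union (mem_powersetCard.mp hS).1]

variable {C : α → α → Prop} {R R₁ R₂ S₁ S₂ : Finset α}

theorem consistent_union_iff (hsymm : Symmetric C) (hcross : ∀ a ∈ A, ∀ b ∈ B, ¬ C a b) :
    Consistent C (A ∪ B) ↔ Consistent C A ∧ Consistent C B := by
  refine ⟨fun h => ⟨h.mono subset_union_left, h.mono subset_union_right⟩, ?_⟩
  rintro ⟨hA, hB⟩ g hg h hh hne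
  rcases mem_union.mp hg with hg | hg <;> rcases mem_union.mp hh with hh | hh
  · exact hA g hg h hh hne
  · exact hcross g hg h hh
  · exact fun hc => hcross h hh g hg (hsymm hc)
  · exact hB g hg h hh hne

theorem IsRepair.inter_left (hsymm : Symmetric C) (hdisj : Disjoint S₁ S₂)
    (hcross : ∀ a ∈ S₁, ∀ b ∈ S₂, ¬ C a b) (hR : IsRepair C R (S₁ ∪ S₂)) :
    IsRepair C (R ∩ S₁) S₁ := by
  obtain ⟨hRS, hRc, hRmax⟩ := hR
  refine ⟨inter_subset_right, hRc.mono inter_subset_left, fun S' hRS' hS' hS'c => ?_⟩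
  -- Enlarging the `S₁`-part of `R` inside `S₁` enlarges `R` itself inside `S₁ ∪ S₂`.
  have hext : S' ∪ R ∩ S₂ = R := by
    refine hRmax _ ?_ (union_subset_union hS' inter_subset_right) ?_
    · exact (inter_union_inter_of_subset_union hRS).superset.trans
        (union_subset_union hRS' subset_rfl)
    · refine (consistent_union_iff hsymm fun a ha b hb => ?_).mpr
        ⟨hS'c, hRc.mono inter_subset_left⟩
      exact hcross a (hS' ha) b (mem_inter.mp hb).2
  rw [← hext, union_inter_left_of_disjoint hdisj hS' inter_subset_right]

theorem IsRepair.inter_right (hsymm : Symmetric C) (hdisj : Disjoint S₁ S₂)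
    (hcross : ∀ a ∈ S₁, ∀ b ∈ S₂, ¬ C a b) (hR : IsRepair C R (S₁ ∪ S₂)) :
    IsRepair C (R ∩ S₂) S₂ := by
  rw [union_comm] at hR
  exact hR.inter_left hsymm hdisj.symm fun b hb a ha hc => hcross a ha b hb (hsymm hc)

theorem IsRepair.union (hsymm : Symmetric C) (hcross : ∀ a ∈ S₁, ∀ b ∈ S₂, ¬ C a b)
    (h₁ : IsRepair C R₁ S₁) (h₂ : IsRepair C R₂ S₂) : IsRepair C (R₁ ∪ R₂) (S₁ ∪ S₂) := by
  obtain ⟨hR₁, hc₁, hmax₁⟩ := h₁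
  obtain ⟨hR₂, hc₂, hmax₂⟩ := h₂
  refine ⟨union_subset_union hR₁ hR₂,
    (consistent_union_iff hsymm fun a ha b hb => hcross a (hR₁ ha) b (hR₂ hb)).mpr ⟨hc₁, hc₂⟩,
    fun S' hRS' hS' hS'c => ?_⟩
  have e₁ : S' ∩ S₁ = R₁ := hmax₁ _ (subset_inter (subset_union_left.trans hRS') hR₁)
    inter_subset_right (hS'c.mono inter_subset_left)
  have e₂ : S' ∩ S₂ = R₂ := hmax₂ _ (subset_inter (subset_union_right.trans hRS') hR₂)
    inter_subset_right (hS'c.mono inter_subset_left)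
  rw [← e₁, ← e₂, inter_union_inter_of_subset_union hS']

theorem IMC_union_of_disjoint (hsymm : Symmetric C) (hdisj : Disjoint S₁ S₂)
    (hcross : ∀ a ∈ S₁, ∀ b ∈ S₂, ¬ C a b) : IMC C (S₁ ∪ S₂) = IMC C S₁ * IMC C S₂ := by
  rw [IMC, IMC, IMC, ← card_product]
  refine card_nbij' (fun R => (R ∩ S₁, R ∩ S₂)) (fun p => p.1 ∪ p.2) ?_ ?_ ?_ ?_
  · intro R hR
    simp only [mem_coe, mem_product, mem_filter_isRepair_iff] at hR ⊢
    exact ⟨hR.inter_left hsymm hdisj hcross, hR.inter_right hsymm hdisj hcross⟩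
  · intro p hp
    simp only [mem_coe, mem_product, mem_filter_isRepair_iff] at hp ⊢
    exact hp.1.union hsymm hcross hp.2
  · intro R hR
    exact inter_union_inter_of_subset_union (mem_filter_isRepair_iff.mp hR).1
  · intro p hp
    simp only [mem_coe, mem_product, mem_filter_isRepair_iff] at hp
    exact Prod.ext (union_inter_left_of_disjoint hdisj hp.1.1 hp.2.1)
      (union_inter_right_of_disjoint hdisj hp.1.1 hp.2.1)

theorem sum_powersetCard_IMC_union_eq_mul (hsymm : Symmetric C) (hdisj : Disjoint D₁ D₂)
    (hcross : ∀ a ∈ D₁, ∀ b ∈ D₂, ¬ C a b) (k₁ k₂ : ℕ) :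
    ∑ S₁ ∈ D₁.powersetCard k₁, ∑ S₂ ∈ D₂.powersetCard k₂, (IMC C (S₁ ∪ S₂) : ℝ) =
      (∑ S₁ ∈ D₁.powersetCard k₁, (IMC C S₁ : ℝ)) * ∑ S₂ ∈ D₂.powersetCard k₂, (IMC C S₂ : ℝ) := by
  rw [sum_mul_sum]
  refine sum_congr rfl fun S₁ hS₁ => sum_congr rfl fun S₂ hS₂ => ?_
  have h₁ := (mem_powersetCard.mp hS₁).1
  have h₂ := (mem_powersetCard.mp hS₂).1
  rw [IMC_union_of_disjoint hsymm (hdisj.mono h₁ h₂) (fun a ha b hb => hcross a (h₁ ha) b (h₂ hb)),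
    Nat.cast_mul]

theorem expIMC_union_decomposition_general (C : α → α → Prop) (hsymm : Symmetric C)
    (D₁ D₂ : Finset α) (hdisj : Disjoint D₁ D₂)
    (hcross : ∀ a ∈ D₁, ∀ b ∈ D₂, ¬ C a b)
    (m : ℕ) :
    expIMC C (D₁ ∪ D₂) m =
      (1 / (((D₁.card + D₂.card).choose m : ℕ) : ℝ)) *
        ∑ p ∈ (Finset.HasAntidiagonal.antidiagonal m).filter
            (fun p => p.1 ≤ D₁.card ∧ p.2 ≤ D₂.card),
          (D₁.card.choose p.1 : ℝ) * (D₂.card.choose p.2 : ℝ) *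
            expIMC C D₁ p.1 * expIMC C D₂ p.2 := by
  have hnum : ∑ S ∈ (D₁ ∪ D₂).powersetCard m, (IMC C S : ℝ) =
      ∑ p ∈ antidiagonal m, (D₁.card.choose p.1 : ℝ) * (D₂.card.choose p.2 : ℝ) *
        expIMC C D₁ p.1 * expIMC C D₂ p.2 := by
    rw [sum_powersetCard_union_of_disjoint _ hdisj]
    refine sum_congr rfl fun p _ => ?_
    rw [sum_powersetCard_IMC_union_eq_mul hsymm hdisj hcross, ← choose_mul_expIMC,
      ← choose_mul_expIMC]
    ring
  have hsupport : ∀ p ∈ antidiagonal m, (D₁.card.choose p.1 : ℝ) * (D₂.card.choose p.2 : ℝ) *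
      expIMC C D₁ p.1 * expIMC C D₂ p.2 ≠ 0 → p.1 ≤ D₁.card ∧ p.2 ≤ D₂.card := by
    intro p _ hp
    constructor <;> by_contra! h <;> simp [Nat.choose_eq_zero_of_lt h] at hp
  rw [expIMC, card_union_of_disjoint hdisj, hnum, sum_filter_of_ne hsupport, one_div_mul_eq_div]

/-- Decomposition of the expected repair count over conflict-independent parts:
if `D₁`, `D₂` are disjoint and conflict-free across each other, then
`P^m = (1/C(n,m)) · Σ_{m₁+m₂=m, m₁≤n₁, m₂≤n₂} C(n₁,m₁)·C(n₂,m₂)·T₁^{m₁}·T₂^{m₂}`. -/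
theorem expIMC_union_decomposition (C : α → α → Prop) (hsymm : Symmetric C)
    (D₁ D₂ : Finset α) (hdisj : Disjoint D₁ D₂)
    (hcross : ∀ a ∈ D₁, ∀ b ∈ D₂, ¬ C a b)
    (m : ℕ) (hm : m ≤ D₁.card + D₂.card) :
    expIMC C (D₁ ∪ D₂) m =
      (1 / (((D₁.card + D₂.card).choose m : ℕ) : ℝ)) *
        ∑ p ∈ (Finset.HasAntidiagonal.antidiagonal m).filter
            (fun p => p.1 ≤ D₁.card ∧ p.2 ≤ D₂.card),
          (D₁.card.choose p.1 : ℝ) * (D₂.card.choose p.2 : ℝ) *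
            expIMC C D₁ p.1 * expIMC C D₂ p.2 :=
  expIMC_union_decomposition_general C hsymm D₁ D₂ hdisj hcross m
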